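/- For any mechanism Q = ({π_m}_m, χ) with χ ∈ {0, 1}, the principal's worst-case equilibrium payoff satisfies inf_{E ∈ E(Q)} V(Q,E) ≤ V_B. -/
import Mathlib


open MeasureTheory Set Filter

noncomputable section

namespace CheapTalk

/-- The economic environment: finite state space `Θ`, full-support prior `ρ`,
continuous strictly monotone state-independent agent utility `uA` normalized on `[0,1]`,
continuous principal utility `uP` with values in `[0,1]`, and actions `0` and `1`
optimal for the principal in some states. -/
structure Env (Θ : Type*) [Fintype Θ] where
  ρ : Θ → ℝ
  ρ_pos : ∀ θ, 0 < ρ θ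
  ρ_sum : ∑ θ, ρ θ = 1
  uA : ℝ → ℝ
  uA_cont : Continuous uA
  uA_mono : StrictMonoOn uA (Icc 0 1)
  uA_zero : uA 0 = 0
  uA_one : uA 1 = 1
  uA_mem : ∀ a ∈ Icc (0:ℝ) 1, uA a ∈ Icc (0:ℝ) 1
  uP : ℝ → Θ → ℝ
  uP_cont : ∀ θ, Continuous fun a => uP a θ
  uP_mem : ∀ a ∈ Icc (0:ℝ) 1, ∀ θ, uP a θ ∈ Icc (0:ℝ) 1
  opt_zero : ∃ θ, ∀ a ∈ Icc (0:ℝ) 1, uP a θ ≤ uP 0 θ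
  opt_one : ∃ θ, ∀ a ∈ Icc (0:ℝ) 1, uP a θ ≤ uP 1 θ

variable {Θ M : Type*} [Fintype Θ] [Fintype M]

/-- A mixed messaging strategy of the agent. -/
def IsStrategy (σ : Θ → M → ℝ) : Prop :=
  (∀ θ m, 0 ≤ σ θ m) ∧ ∀ θ, ∑ m, σ θ m = 1

/-- Ex-ante probability of message `m` under strategy `σ`. -/
def msgProb (E : Env Θ) (σ : Θ → M → ℝ) (m : M) : ℝ := ∑ θ, E.ρ θ * σ θ m

/-- A message is on path if it has positive ex-ante probability. -/
def OnPath (E : Env Θ) (σ : Θ → M → ℝ) (m : M) : Prop := 0 < msgProb E σ m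

/-- Bayesian posterior belief after message `m`. -/
def posterior (E : Env Θ) (σ : Θ → M → ℝ) (m : M) (θ : Θ) : ℝ :=
  E.ρ θ * σ θ m / msgProb E σ m

/-- The principal's expected utility from action `a` under belief `μ`. -/
def pUtil (E : Env Θ) (μ : Θ → ℝ) (a : ℝ) : ℝ := ∑ θ, μ θ * E.uP a θ

/-- The set of the principal's best-response actions to belief `μ`. -/
def BRset (E : Env Θ) (μ : Θ → ℝ) : Set ℝ :=
  {a | a ∈ Icc (0:ℝ) 1 ∧ ∀ b ∈ Icc (0:ℝ) 1, pUtil E μ b ≤ pUtil E μ a}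

/-- A mechanism: a committed action plan (a lottery over actions in `[0,1]` for
each message) and a credibility level `χ ∈ [0,1]`. -/
structure Mech (M : Type*) where
  π : M → Measure ℝ
  π_prob : ∀ m, IsProbabilityMeasure (π m)
  π_supp : ∀ m, π m (Icc 0 1) = 1
  χ : ℝ
  χ_nonneg : 0 ≤ χ
  χ_le_one : χ ≤ 1

/-- The agent's expected payoff from the (uncommitted) principal's response to `m`. -/
def uAOf (E : Env Θ) (σP : M → Measure ℝ) (m : M) : ℝ := ∫ a, E.uA a ∂(σP m)

/-- `σP` is a best-response strategy of the uncommitted principal to `σ`: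
probability measures on `[0,1]`, supported on the best-response set at every
on-path message, and pessimistic (agent payoff `0`) at off-path messages. -/
def IsBR (E : Env Θ) (σ : Θ → M → ℝ) (σP : M → Measure ℝ) : Prop :=
  (∀ m, IsProbabilityMeasure (σP m) ∧ σP m (Icc 0 1) = 1) ∧
  (∀ m, OnPath E σ m → σP m (BRset E (posterior E σ m)) = 1) ∧
  (∀ m, ¬ OnPath E σ m → uAOf E σP m = 0)

/-- The agent's expected payoff from sending message `m` under mechanism `Q`
when the uncommitted principal plays `σP`. -/
def UA (E : Env Θ) (Q : Mech M) (σP : M → Measure ℝ) (m : M) : ℝ :=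
  Q.χ * ∫ a, E.uA a ∂(Q.π m) + (1 - Q.χ) * uAOf E σP m

/-- An equilibrium of the game induced by mechanism `Q`: agent-optimality (AO),
principal-optimality (PO) with pessimistic off-path beliefs, and no perfect
pooling (NPP). -/
structure Eqm (E : Env Θ) (Q : Mech M) where
  σA : Θ → M → ℝ
  σP : M → Measure ℝ
  strat : IsStrategy σA
  br : IsBR E σA σP
  ao : ∀ θ m, 0 < σA θ m → ∀ m', UA E Q σP m' ≤ UA E Q σP m
  npp : ∀ m, msgProb E σA m < 1

/-- The principal's expected payoff in equilibrium `e` of mechanism `Q`. -/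
def V (E : Env Θ) (Q : Mech M) (e : Eqm E Q) : ℝ :=
  Q.χ * ∑ θ, ∑ m, E.ρ θ * e.σA θ m * ∫ a, E.uP a θ ∂(Q.π m) +
    (1 - Q.χ) * ∑ θ, ∑ m, E.ρ θ * e.σA θ m * ∫ a, E.uP a θ ∂(e.σP m)

/-- The principal's no-communication payoff. -/
def VB (E : Env Θ) : ℝ := sSup {v | ∃ a ∈ Icc (0:ℝ) 1, v = pUtil E E.ρ a}

/-- The set of the principal's equilibrium payoffs under `Q`. -/
def eqPayoffs (E : Env Θ) (Q : Mech M) : Set ℝ := {v | ∃ e : Eqm E Q, v = V E Q e}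

-- The principal's worst-case (lowest) equilibrium payoff under `Q`;
-- by convention `VB E` if `Q` admits no equilibrium.
open Classical in
def worstCase (E : Env Θ) (Q : Mech M) : ℝ :=
  if (eqPayoffs E Q).Nonempty then sInf (eqPayoffs E Q) else VB E

-- The principal's best equilibrium payoff under `Q`;
-- by convention `VB E` if `Q` admits no equilibrium.
open Classical in
def bestCase (E : Env Θ) (Q : Mech M) : ℝ :=
  if (eqPayoffs E Q).Nonempty then sSup (eqPayoffs E Q) else VB E

/-- The optimal payoff `V̄`: supremum over mechanisms and their equilibria. -/
def Vbar (E : Env Θ) (M' : Type*) [Fintype M'] : ℝ :=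
  sSup {v | ∃ Q : Mech M', v ∈ eqPayoffs E Q}

/-- The cheap-talk payoff: the principal's highest equilibrium payoff with `χ = 0`. -/
def VCT (E : Env Θ) (M' : Type*) [Fintype M'] : ℝ :=
  sSup {v | ∃ Q : Mech M', Q.χ = 0 ∧ v ∈ eqPayoffs E Q}

/-- `σ` is a messaging strategy of some equilibrium of `Q` (i.e. `σ ∈ Σ(Q)`). -/
def Feasible (E : Env Θ) (Q : Mech M) (σ : Θ → M → ℝ) : Prop := ∃ e : Eqm E Q, e.σA = σ

/-- A payoff is worst-case implementable: it is the worst-case payoff of some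
mechanism with `χ < 1`, or a limit of such along `χₙ → 1` (virtual implementation). -/
def WCImplementable (E : Env Θ) (M' : Type*) [Fintype M'] (v : ℝ) : Prop :=
  (∃ Q : Mech M', Q.χ < 1 ∧ v = worstCase E Q) ∨
  (∃ Qs : ℕ → Mech M',
    (∀ n, (Qs n).χ < 1) ∧
    Tendsto (fun n => (Qs n).χ) atTop (nhds 1) ∧
    Tendsto (fun n => worstCase E (Qs n)) atTop (nhds v))

/-- The worst-case optimal payoff `V⋆`. -/
def Vstar (E : Env Θ) (M' : Type*) [Fintype M'] : ℝ :=
  sSup {v | WCImplementable E M' v}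

/-- A two-message strategy: exactly two on-path messages. -/
def TwoMessage (E : Env Θ) (σ : Θ → M → ℝ) : Prop :=
  IsStrategy σ ∧ ∃ m₁ m₂ : M, m₁ ≠ m₂ ∧ OnPath E σ m₁ ∧ OnPath E σ m₂ ∧
    ∀ m, OnPath E σ m → m = m₁ ∨ m = m₂

/-- `Δ(σ)`: the largest agent-payoff spread across the two on-path messages
that `σ` can induce from a best-responding uncommitted principal. -/
def spread (E : Env Θ) (σ : Θ → M → ℝ) : ℝ :=
  sSup {d | ∃ (σP : M → Measure ℝ) (m₁ m₂ : M), IsBR E σ σP ∧ m₁ ≠ m₂ ∧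
    OnPath E σ m₁ ∧ OnPath E σ m₂ ∧ d = |uAOf E σP m₁ - uAOf E σP m₂|}

/-- A polarizing strategy: a two-message strategy maximizing the spread `Δ(σ)`
(i.e. an element of `Σ⋆`). -/
def Polarizing (E : Env Θ) (σ : Θ → M → ℝ) : Prop :=
  TwoMessage E σ ∧ ∀ σ' : Θ → M → ℝ, TwoMessage E σ' → spread E σ' ≤ spread E σ

/-- `Δ̄`: the maximal spread over two-message strategies. -/
def Δbar (E : Env Θ) (M' : Type*) [Fintype M'] : ℝ :=
  sSup {d | ∃ σ : Θ → M' → ℝ, TwoMessage E σ ∧ d = spread E σ}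

/-- A polarizing mechanism: partial commitment and some polarizing strategy is feasible. -/
def PolarizingMech (E : Env Θ) (Q : Mech M) : Prop :=
  Q.χ < 1 ∧ ∃ σ : Θ → M → ℝ, Polarizing E σ ∧ Feasible E Q σ

/-- Agent payoffs achievable by principal best responses to belief `μ` (the set `u(μ)`). -/
def uSet (E : Env Θ) (μ : Θ → ℝ) : Set ℝ :=
  {u | ∃ ν : Measure ℝ, IsProbabilityMeasure ν ∧ ν (BRset E μ) = 1 ∧ u = ∫ a, E.uA a ∂ν}

/-- The set `U` of pairs of agent payoffs arising from principal best responses to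
the two messages of some Bayes-plausible two-message strategy. -/
def payoffPairs (E : Env Θ) (M' : Type*) [Fintype M'] : Set (ℝ × ℝ) :=
  {p | ∃ (σ : Θ → M' → ℝ) (σP : M' → Measure ℝ) (m₁ m₂ : M'),
    TwoMessage E σ ∧ IsBR E σ σP ∧ m₁ ≠ m₂ ∧ OnPath E σ m₁ ∧ OnPath E σ m₂ ∧
    p = (uAOf E σP m₁, uAOf E σP m₂)}

/-- Genericity 2: the set `U` has a unique polarizing point (up to relabeling). -/
def Genericity2 (E : Env Θ) (M' : Type*) [Fintype M'] : Prop :=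
  ∃! p : ℝ × ℝ, p ∈ payoffPairs E M' ∧ p.1 ≤ p.2 ∧
    ∀ q ∈ payoffPairs E M', |q.1 - q.2| ≤ |p.1 - p.2|

/-- Degenerate belief on state `θ`. -/
def diracBelief (θ : Θ) : Θ → ℝ := ({θ} : Set Θ).indicator fun _ => 1

/-- Genericity 1: at most two best responses at every belief, a unique best
response at Lebesgue-almost-every belief, and a unique optimum in each state. -/
def Genericity1 (E : Env Θ) : Prop :=
  (∀ μ ∈ stdSimplex ℝ Θ, ∃ a b : ℝ, ∀ c ∈ BRset E μ, c = a ∨ c = b) ∧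
  (∃ N : Set (Θ → ℝ), (volume : Measure (Θ → ℝ)) N = 0 ∧
    ∀ μ ∈ stdSimplex ℝ Θ, μ ∉ N → ∃! a, a ∈ BRset E μ) ∧
  (∀ θ : Θ, ∃! a, a ∈ BRset E (diracBelief θ))

/-- No profitable cheap talk: in any equilibrium of the game with `χ = 0`, the
agent's payoff does not exceed his payoff under no communication. -/
def NoCheapTalk (E : Env Θ) (M' : Type*) [Fintype M'] : Prop :=
  ∀ Q : Mech M', Q.χ = 0 → ∀ e : Eqm E Q, ∀ m, OnPath E e.σA m →
    uAOf E e.σP m ≤ sSup (uSet E E.ρ)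

/-- The concave envelope on `[0,1]`: the pointwise smallest concave function
dominating `γ` on `[0,1]`. -/
def concEnv (γ : ℝ → ℝ) (u : ℝ) : ℝ :=
  sInf {v | ∃ g : ℝ → ℝ, ConcaveOn ℝ (Icc (0:ℝ) 1) g ∧
    (∀ x ∈ Icc (0:ℝ) 1, γ x ≤ g x) ∧ v = g u}

/-- The mutual payoff function `γ_θ(u) = u_P(u_A⁻¹(u), θ)`. -/
def γθ (E : Env Θ) (θ : Θ) (u : ℝ) : ℝ := E.uP (Function.invFunOn E.uA (Icc 0 1) u) θ

/-- The principal's committed payoff from full-commitment plan `π` under strategy `σ`. -/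
def VfcPlan (E : Env Θ) (π : M → Measure ℝ) (σ : Θ → M → ℝ) : ℝ :=
  ∑ θ, ∑ m, E.ρ θ * σ θ m * ∫ a, E.uP a θ ∂(π m)

/-- The set `w(Q)` of equilibrium outcome pairs (agent payoff, principal payoff). -/
def outcomes (E : Env Θ) (Q : Mech M) : Set (ℝ × ℝ) :=
  {p | ∃ e : Eqm E Q, p.2 = V E Q e ∧ ∀ m, OnPath E e.σA m → p.1 = UA E Q e.σP m}

/-- The set `w_fc(π, Σ)` of outcome pairs of full-commitment plan `π` under
strategies restricted to `S`. -/
def outcomesFC (E : Env Θ) (π : M → Measure ℝ) (S : Set (Θ → M → ℝ)) : Set (ℝ × ℝ) :=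
  {p | ∃ σ ∈ S, p.2 = VfcPlan E π σ ∧ ∀ m, OnPath E σ m → p.1 = ∫ a, E.uA a ∂(π m)}



/-! ### Auxiliary lemmas -/

section Aux
open scoped Classical

lemma compl_null {ν : Measure ℝ} [IsProbabilityMeasure ν] (hs : ν (Icc 0 1) = 1) :
    ν (Icc (0:ℝ) 1)ᶜ = 0 := by
  rw [measure_compl measurableSet_Icc (measure_ne_top ν _), measure_univ, hs, tsub_self]

lemma ae_mem_Icc {ν : Measure ℝ} [IsProbabilityMeasure ν] (hs : ν (Icc 0 1) = 1) :
    ∀ᵐ a ∂ν, a ∈ Icc (0:ℝ) 1 := by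
  rw [ae_iff]; exact compl_null hs

lemma int_nonneg' {ν : Measure ℝ} [IsProbabilityMeasure ν] (hs : ν (Icc 0 1) = 1)
    {f : ℝ → ℝ} (hf : ∀ a ∈ Icc (0:ℝ) 1, 0 ≤ f a) : 0 ≤ ∫ a, f a ∂ν := by
  refine integral_nonneg_of_ae ?_
  filter_upwards [ae_mem_Icc hs] with a ha using hf a ha

lemma integrable_cont {ν : Measure ℝ} [IsProbabilityMeasure ν] (hs : ν (Icc 0 1) = 1)
    {f : ℝ → ℝ} (hf : Continuous f) : Integrable f ν := by
  obtain ⟨C, hC⟩ := isCompact_Icc.exists_bound_of_continuousOn hf.continuousOn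
  refine ⟨hf.aestronglyMeasurable, ?_⟩
  refine HasFiniteIntegral.of_bounded (C := C) ?_
  filter_upwards [ae_mem_Icc hs] with a ha using hC a ha

lemma int_le' {ν : Measure ℝ} [IsProbabilityMeasure ν] (hs : ν (Icc 0 1) = 1)
    {f : ℝ → ℝ} {C : ℝ} (hf : Continuous f) (hC : ∀ a ∈ Icc (0:ℝ) 1, f a ≤ C) :
    ∫ a, f a ∂ν ≤ C := by
  have h1 : ∫ a, f a ∂ν ≤ ∫ _, C ∂ν := by
    refine integral_mono_ae (integrable_cont hs hf) (integrable_const C) ?_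
    filter_upwards [ae_mem_Icc hs] with a ha using hC a ha
  simpa using h1

variable {Θ M : Type*} [Fintype Θ] [Fintype M]

/-- Nonnegativity of the principal's equilibrium payoff. -/
lemma V_nonneg (E : Env Θ) (Q : Mech M) (e : Eqm E Q) : 0 ≤ V E Q e := by
  have h1 : ∀ (ν : Measure ℝ), IsProbabilityMeasure ν → ν (Icc 0 1) = 1 → ∀ θ : Θ,
      (0:ℝ) ≤ ∫ a, E.uP a θ ∂ν := by
    intro ν hν hs θ
    haveI := hν
    exact int_nonneg' hs fun a ha => (E.uP_mem a ha θ).1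
  refine add_nonneg (mul_nonneg Q.χ_nonneg ?_) (mul_nonneg (by linarith [Q.χ_le_one]) ?_) <;>
    refine Finset.sum_nonneg fun θ _ => Finset.sum_nonneg fun m _ =>
      mul_nonneg (mul_nonneg (E.ρ_pos θ).le (e.strat.1 θ m)) ?_
  · exact h1 _ (Q.π_prob m) (Q.π_supp m) θ
  · exact h1 _ ((e.br.1 m).1) ((e.br.1 m).2) θ

/-- The two-message uniform strategy. -/
def twoMsg (Θ : Type*) (m1 m2 : M) : Θ → M → ℝ :=
  fun _ m => (if m = m1 then (1:ℝ)/2 else 0) + (if m = m2 then (1:ℝ)/2 else 0)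

/-- The principal response: `dirac a₀` on path, `dirac 0` off path. -/
def resp (a₀ : ℝ) (m1 m2 : M) : M → Measure ℝ :=
  fun m => if m = m1 ∨ m = m2 then Measure.dirac a₀ else Measure.dirac 0

lemma msgProb_twoMsg (E : Env Θ) (m1 m2 m : M) :
    msgProb E (twoMsg Θ m1 m2) m
      = (if m = m1 then (1:ℝ)/2 else 0) + (if m = m2 then (1:ℝ)/2 else 0) := by
  simp only [msgProb, twoMsg, ← Finset.sum_mul]
  rw [E.ρ_sum, one_mul]

lemma onPath_twoMsg (E : Env Θ) (m1 m2 m : M) :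
    OnPath E (twoMsg Θ m1 m2) m ↔ (m = m1 ∨ m = m2) := by
  rw [OnPath, msgProb_twoMsg]
  constructor
  · intro h
    by_contra hc
    push_neg at hc
    simp [hc.1, hc.2] at h
  · rintro (rfl | rfl) <;> split_ifs <;> simp_all

lemma posterior_twoMsg (E : Env Θ) {m1 m2 : M} (hne : m1 ≠ m2) {m : M}
    (hm : m = m1 ∨ m = m2) : posterior E (twoMsg Θ m1 m2) m = E.ρ := by
  funext θ
  rw [posterior, msgProb_twoMsg]
  rcases hm with rfl | rfl
  · simp [twoMsg, hne]
  · simp [twoMsg, hne.symm]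

/-- Construction of a two-message equilibrium. -/
lemma build_eqm (E : Env Θ) (Q : Mech M) (m1 m2 : M) (hne : m1 ≠ m2)
    {a₀ : ℝ} (ha : a₀ ∈ BRset E E.ρ)
    (hAO : ∀ i, (i = m1 ∨ i = m2) → ∀ m',
      UA E Q (resp a₀ m1 m2) m' ≤ UA E Q (resp a₀ m1 m2) i) :
    ∃ e : Eqm E Q, e.σA = twoMsg Θ m1 m2 ∧ e.σP = resp a₀ m1 m2 := by
  have ha01 : a₀ ∈ Icc (0:ℝ) 1 := ha.1
  refine ⟨⟨twoMsg Θ m1 m2, resp a₀ m1 m2, ?_, ⟨?_, ?_, ?_⟩, ?_, ?_⟩, rfl, rfl⟩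
  · constructor
    · intro θ m
      refine add_nonneg ?_ ?_ <;> split <;> norm_num
    · intro θ
      simp only [twoMsg]
      rw [Finset.sum_add_distrib]
      simp [Finset.sum_ite_eq', hne]
      norm_num
  · intro m
    unfold resp
    split
    · exact ⟨inferInstance, Measure.dirac_apply_of_mem ha01⟩
    · exact ⟨inferInstance, Measure.dirac_apply_of_mem (by norm_num)⟩
  · intro m hm
    have hm' := (onPath_twoMsg E m1 m2 m).1 hm
    rw [posterior_twoMsg E hne hm']
    unfold resp
    rw [if_pos hm']
    exact Measure.dirac_apply_of_mem ha
  · intro m hm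
    have hm' : ¬ (m = m1 ∨ m = m2) := fun h => hm ((onPath_twoMsg E m1 m2 m).2 h)
    unfold uAOf resp
    rw [if_neg hm', integral_dirac, E.uA_zero]
  · intro θ m hpos m'
    refine hAO m ?_ m'
    by_contra h
    push_neg at h
    simp [twoMsg, h.1, h.2] at hpos
  · intro m
    rw [msgProb_twoMsg]
    split_ifs with h1 h2 h2 <;> try norm_num
    exact absurd (h1.symm.trans h2) hne

end Aux

section Main
open scoped Classical
variable {Θ M : Type*} [Fintype Θ] [Fintype M]

lemma sum_twoMsg_mul {m1 m2 : M} (hne : m1 ≠ m2) (r : ℝ) (c : M → ℝ) (θ : Θ) :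
    ∑ m, r * twoMsg Θ m1 m2 θ m * c m = (r * c m1 + r * c m2) / 2 := by
  simp only [twoMsg, mul_add, add_mul, mul_ite, ite_mul, mul_zero, zero_mul,
    Finset.sum_add_distrib, Finset.sum_ite_eq', Finset.mem_univ, if_true]
  ring

lemma uAOf_resp (E : Env Θ) (a₀ : ℝ) (m1 m2 m : M) :
    uAOf E (resp a₀ m1 m2) m = if m = m1 ∨ m = m2 then E.uA a₀ else 0 := by
  unfold uAOf resp
  split_ifs <;> rw [integral_dirac] <;> simp [E.uA_zero]

lemma V_build (E : Env Θ) (Q : Mech M) {m1 m2 : M} (hne : m1 ≠ m2) {a₀ : ℝ}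
    (e : Eqm E Q) (hA : e.σA = twoMsg Θ m1 m2) (hP : e.σP = resp a₀ m1 m2) :
    V E Q e = Q.χ * (((∑ θ, E.ρ θ * ∫ a, E.uP a θ ∂(Q.π m1)) +
        ∑ θ, E.ρ θ * ∫ a, E.uP a θ ∂(Q.π m2)) / 2) +
      (1 - Q.χ) * pUtil E E.ρ a₀ := by
  rw [V, hA, hP]
  congr 1
  · congr 1
    calc ∑ θ, ∑ m, E.ρ θ * twoMsg Θ m1 m2 θ m * ∫ a, E.uP a θ ∂(Q.π m)
        = ∑ θ, (E.ρ θ * ∫ a, E.uP a θ ∂(Q.π m1)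
            + E.ρ θ * ∫ a, E.uP a θ ∂(Q.π m2)) / 2 :=
          Finset.sum_congr rfl fun θ _ => sum_twoMsg_mul hne _ _ θ
      _ = _ := by rw [← Finset.sum_div, Finset.sum_add_distrib]
  · congr 1
    rw [pUtil]
    refine Finset.sum_congr rfl fun θ _ => ?_
    rw [sum_twoMsg_mul hne]
    have h1 : ∫ a, E.uP a θ ∂(resp a₀ m1 m2 m1) = E.uP a₀ θ := by
      unfold resp; rw [if_pos (Or.inl rfl), integral_dirac]
    have h2 : ∫ a, E.uP a θ ∂(resp a₀ m1 m2 m2) = E.uP a₀ θ := by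
      unfold resp; rw [if_pos (Or.inr rfl), integral_dirac]
    rw [h1, h2]; ring

lemma sum_int_le (E : Env Θ) {ν : Measure ℝ} [IsProbabilityMeasure ν]
    (hs : ν (Icc 0 1) = 1) (hcont : Continuous (pUtil E E.ρ)) {a₀ : ℝ}
    (hmax : ∀ b ∈ Icc (0:ℝ) 1, pUtil E E.ρ b ≤ pUtil E E.ρ a₀) :
    ∑ θ, E.ρ θ * ∫ a, E.uP a θ ∂ν ≤ pUtil E E.ρ a₀ := by
  have h1 : ∫ a, pUtil E E.ρ a ∂ν = ∑ θ, E.ρ θ * ∫ a, E.uP a θ ∂ν := by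
    simp only [pUtil]
    rw [integral_finset_sum _ fun θ _ => (integrable_cont hs (E.uP_cont θ)).const_mul _]
    exact Finset.sum_congr rfl fun θ _ => integral_const_mul _ _
  rw [← h1]
  exact int_le' hs hcont hmax

end Main

/-- For any mechanism `Q` with `χ ∈ {0,1}`, the principal's
worst-case equilibrium payoff is at most the no-communication payoff `V_B`. -/
theorem extreme_commitment_fails
    {Θ M : Type*} [Fintype Θ] [Fintype M] (E : Env Θ)
    (hn : 2 ≤ Fintype.card Θ) (hM : Fintype.card Θ ≤ Fintype.card M)
    (Q : Mech M) (hχ : Q.χ = 0 ∨ Q.χ = 1) :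
    worstCase E Q ≤ VB E := by
  classical
  -- a maximizer of the principal's payoff against the prior
  have hcont : Continuous (pUtil E E.ρ) :=
    continuous_finset_sum _ fun θ _ => continuous_const.mul (E.uP_cont θ)
  obtain ⟨a₀, ha₀mem, ha₀max⟩ :=
    isCompact_Icc.exists_isMaxOn (nonempty_Icc.2 zero_le_one) hcont.continuousOn
  have ha₀max' : ∀ b ∈ Icc (0:ℝ) 1, pUtil E E.ρ b ≤ pUtil E E.ρ a₀ :=
    fun b hb => ha₀max hb
  have haBR : a₀ ∈ BRset E E.ρ := ⟨ha₀mem, ha₀max'⟩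
  have hVBbdd : BddAbove {v | ∃ a ∈ Icc (0:ℝ) 1, v = pUtil E E.ρ a} := by
    refine ⟨pUtil E E.ρ a₀, ?_⟩
    rintro v ⟨a, ha, rfl⟩
    exact ha₀max' a ha
  have hVB : pUtil E E.ρ a₀ ≤ VB E := le_csSup hVBbdd ⟨a₀, ha₀mem, rfl⟩
  have hbddB : BddBelow (eqPayoffs E Q) := by
    refine ⟨0, ?_⟩
    rintro v ⟨e, rfl⟩
    exact V_nonneg E Q e
  have key : ∀ e : Eqm E Q, V E Q e ≤ VB E → worstCase E Q ≤ VB E := by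
    intro e hV
    rw [worstCase, if_pos ⟨V E Q e, e, rfl⟩]
    exact le_trans (csInf_le hbddB ⟨e, rfl⟩) hV
  have huA0 : 0 ≤ E.uA a₀ := by
    have := E.uA_mono.monotoneOn (left_mem_Icc.2 zero_le_one) ha₀mem ha₀mem.1
    rwa [E.uA_zero] at this
  rcases hχ with h0 | h1
  · -- cheap talk: babbling equilibrium on any two messages
    obtain ⟨m1, m2, hne⟩ :=
      Fintype.exists_pair_of_one_lt_card (lt_of_lt_of_le (lt_of_lt_of_le one_lt_two hn) hM)
    have hAO : ∀ i, (i = m1 ∨ i = m2) → ∀ m',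
        UA E Q (resp a₀ m1 m2) m' ≤ UA E Q (resp a₀ m1 m2) i := by
      intro i hi m'
      rw [UA, UA, h0, zero_mul, zero_mul, zero_add, zero_add, sub_zero, one_mul, one_mul,
        uAOf_resp, uAOf_resp, if_pos hi]
      split_ifs <;> [exact le_refl _; exact huA0]
    obtain ⟨e, hA, hP⟩ := build_eqm E Q m1 m2 hne haBR hAO
    refine key e ?_
    rw [V_build E Q hne e hA hP, h0, zero_mul, zero_add, sub_zero, one_mul]
    exact hVB
  · -- full commitment
    have hMne : Nonempty M := Fintype.card_pos_iff.1 (by omega)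
    set g : M → ℝ := fun m => ∫ a, E.uA a ∂(Q.π m) with hg
    obtain ⟨m₀, -, hm₀⟩ := Finset.exists_max_image Finset.univ g Finset.univ_nonempty
    by_cases hex : ∃ m', m' ≠ m₀ ∧ g m' = g m₀
    · obtain ⟨m', hne', hgm'⟩ := hex
      have hne : m₀ ≠ m' := hne'.symm
      have hUA : ∀ m, UA E Q (resp a₀ m₀ m') m = g m := by
        intro m
        rw [UA, h1, one_mul, sub_self, zero_mul, add_zero]
      have hAO : ∀ i, (i = m₀ ∨ i = m') → ∀ m,
          UA E Q (resp a₀ m₀ m') m ≤ UA E Q (resp a₀ m₀ m') i := by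
        intro i hi m
        rw [hUA, hUA]
        have : g i = g m₀ := by rcases hi with rfl | rfl; exacts [rfl, hgm']
        rw [this]
        exact hm₀ m (Finset.mem_univ m)
      obtain ⟨e, hA, hP⟩ := build_eqm E Q m₀ m' hne haBR hAO
      refine key e ?_
      rw [V_build E Q hne e hA hP, h1, one_mul, sub_self, zero_mul, add_zero]
      have hc1 : ∑ θ, E.ρ θ * ∫ a, E.uP a θ ∂(Q.π m₀) ≤ pUtil E E.ρ a₀ := by
        haveI := Q.π_prob m₀
        exact sum_int_le E (Q.π_supp m₀) hcont ha₀max'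
      have hc2 : ∑ θ, E.ρ θ * ∫ a, E.uP a θ ∂(Q.π m') ≤ pUtil E E.ρ a₀ := by
        haveI := Q.π_prob m'
        exact sum_int_le E (Q.π_supp m') hcont ha₀max'
      linarith
    · -- unique maximizer: no equilibrium exists
      push_neg at hex
      have hempty : ¬ (eqPayoffs E Q).Nonempty := by
        rintro ⟨v, e, rfl⟩
        have hUA : ∀ m, UA E Q e.σP m = g m := by
          intro m
          rw [UA, h1, one_mul, sub_self, zero_mul, add_zero]
        -- every state puts all mass on m₀
        have hall : ∀ θ, ∀ m, m ≠ m₀ → e.σA θ m = 0 := by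
          intro θ m hm
          by_contra hpos
          have hpos' : 0 < e.σA θ m :=
            lt_of_le_of_ne (e.strat.1 θ m) (Ne.symm hpos)
          have hmax : ∀ m', UA E Q e.σP m' ≤ UA E Q e.σP m := e.ao θ m hpos'
          have h1' : g m₀ ≤ g m := by rw [← hUA m₀, ← hUA m]; exact hmax m₀
          exact hex m hm (le_antisymm (hm₀ m (Finset.mem_univ m)) h1')
        have hone : ∀ θ, e.σA θ m₀ = 1 := by
          intro θ
          have := e.strat.2 θ
          rwa [Finset.sum_eq_single m₀ (fun m _ hm => hall θ m hm)
            (fun h => absurd (Finset.mem_univ m₀) h)] at this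
        have : msgProb E e.σA m₀ = 1 := by
          rw [msgProb]
          simp only [hone, mul_one]
          exact E.ρ_sum
        exact absurd (e.npp m₀) (by rw [this]; exact lt_irrefl 1)
      rw [worstCase, if_neg hempty]

end CheapTalk
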